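/- arXiv:1606.01725 — 3 statements merged into one kernel-verified Lean document; each statement's English description precedes it below -/
import Mathlib

section
/- Let p ≥ 1 and let {V_{mn}, m,n ≥ 1} be a double array of independent mean-0 real-valued random variables such that ∑_{m=1}^∞ ∑_{n=1}^∞ E|S_{mn}|^p/(mn)^{p+1} < ∞, where S_{mn} = ∑_{i=1}^m ∑_{j=1}^n V_{ij}. Then E|S_{mn}/(mn)|^p → 0 as m ∨ n → ∞; that is, for every ε > 0 there exists N such that max(m,n) ≥ N implies E|S_{mn}|^p/(mn)^p < ε. -/
/-! Independence and mean zero make `E|∑ i ∈ s, W i|^p` monotone in the index set `s`: for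
independent `X`, `Y` with `E Y = 0`, Jensen's inequality for `y ↦ |x + y|^p` under the law of `Y`
gives `|x|^p ≤ E|x + Y|^p`, and integrating in `x` against the law of `X` gives
`E|X|^p ≤ E|X + Y|^p`. With `a m n = E|S_{mn}|^p`, monotonicity bounds each of the `m n` terms
`a k l / (k l)^(p+1)` of the block `m ≤ k < 2m`, `n ≤ l < 2n` from below by
`a m n / (4 m n)^(p+1)`, so `a m n / (m n)^p` is at most `4^(p+1)` times a block sum, and these
block sums lie in the tail of a convergent series once `max m n` is large. -/

open MeasureTheory ProbabilityTheory Finset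

lemma convexOn_abs_rpow {p : ℝ} (hp : 1 ≤ p) : ConvexOn ℝ Set.univ fun x : ℝ => |x| ^ p := by
  have hnorm : ConvexOn ℝ Set.univ fun x : ℝ => |x| := convexOn_norm convex_univ
  have himage : (fun x : ℝ => |x|) '' Set.univ = Set.Ici 0 := by
    ext y
    exact ⟨by rintro ⟨x, -, rfl⟩; exact abs_nonneg x, fun hy => ⟨y, trivial, abs_of_nonneg hy⟩⟩
  refine ConvexOn.comp (g := fun t : ℝ => t ^ p) ?_ hnorm ?_ <;> rw [himage]
  · exact convexOn_rpow hp
  · exact Real.monotoneOn_rpow_Ici_of_exponent_nonneg (by linarith)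

section

variable {Ω : Type*} [MeasurableSpace Ω] {μ : Measure Ω}

lemma ConvexOn.le_integral_comp_add [IsProbabilityMeasure μ] {φ : ℝ → ℝ}
    (hφ : ConvexOn ℝ Set.univ φ) (hφc : Continuous φ) {Y : Ω → ℝ} (hY : Integrable Y μ)
    (hY0 : ∫ ω, Y ω ∂μ = 0) (x : ℝ) (hφY : Integrable (fun ω => φ (x + Y ω)) μ) :
    φ x ≤ ∫ ω, φ (x + Y ω) ∂μ := by
  have hmean : ∫ ω, (x + Y ω) ∂μ = x := by
    rw [integral_add (integrable_const x) hY, hY0]; simp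
  simpa only [hmean] using hφ.map_integral_le (f := fun ω => x + Y ω) hφc.continuousOn
    isClosed_univ (.of_forall fun _ => Set.mem_univ _) ((integrable_const x).add hY) hφY

lemma integral_comp_le_integral_comp_add_of_indepFun [IsProbabilityMeasure μ] {φ : ℝ → ℝ}
    (hφ : ConvexOn ℝ Set.univ φ) (hφc : Continuous φ) {X Y : Ω → ℝ}
    (hX : AEMeasurable X μ) (hY : AEMeasurable Y μ) (hXY : IndepFun X Y μ)
    (hYi : Integrable Y μ) (hY0 : ∫ ω, Y ω ∂μ = 0)
    (hφX : Integrable (fun ω => φ (X ω)) μ) (hφXY : Integrable (fun ω => φ (X ω + Y ω)) μ) :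
    ∫ ω, φ (X ω) ∂μ ≤ ∫ ω, φ (X ω + Y ω) ∂μ := by
  set ν₁ := μ.map X
  set ν₂ := μ.map Y
  have : IsProbabilityMeasure ν₂ := Measure.isProbabilityMeasure_map hY
  have hmap : μ.map (fun ω => (X ω, Y ω)) = ν₁.prod ν₂ :=
    (indepFun_iff_map_prod_eq_prod_map_map hX hY).mp hXY
  have hXY' : AEMeasurable (fun ω => (X ω, Y ω)) μ := hX.prodMk hY
  have hψ : Continuous fun z : ℝ × ℝ => φ (z.1 + z.2) := hφc.comp continuous_add
  have hψi : Integrable (fun z : ℝ × ℝ => φ (z.1 + z.2)) (ν₁.prod ν₂) := by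
    rw [← hmap, integrable_map_measure hψ.aestronglyMeasurable hXY']
    exact hφXY
  have hYi' : Integrable id ν₂ := by
    rwa [integrable_map_measure aestronglyMeasurable_id hY]
  have hY0' : ∫ y, id y ∂ν₂ = 0 := by
    rwa [integral_map hY aestronglyMeasurable_id]
  calc ∫ ω, φ (X ω) ∂μ = ∫ x, φ x ∂ν₁ :=
        (integral_map hX hφc.aestronglyMeasurable).symm
    _ ≤ ∫ x, ∫ y, φ (x + y) ∂ν₂ ∂ν₁ := by
        refine integral_mono_ae ?_ hψi.integral_prod_left ?_
        · rwa [integrable_map_measure hφc.aestronglyMeasurable hX]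
        filter_upwards [hψi.prod_right_ae] with x hx
        exact hφ.le_integral_comp_add hφc hYi' hY0' x hx
    _ = ∫ z : ℝ × ℝ, φ (z.1 + z.2) ∂(ν₁.prod ν₂) := (integral_prod _ hψi).symm
    _ = ∫ ω, φ (X ω + Y ω) ∂μ := by
        rw [← hmap, integral_map hXY' hψ.aestronglyMeasurable]

lemma ProbabilityTheory.iIndepFun.indepFun_sum_sum_of_disjoint {ι β : Type*} [AddCommMonoid β]
    [MeasurableSpace β] [MeasurableAdd₂ β] {W : ι → Ω → β} (h : iIndepFun W μ)
    (hW : ∀ i, AEMeasurable (W i) μ) {s t : Finset ι} (hst : Disjoint s t) :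
    IndepFun (∑ i ∈ s, W i) (∑ i ∈ t, W i) μ := by
  have hsum : ∀ u : Finset ι, Measurable fun v : u → β => ∑ i, v i :=
    fun u => Finset.measurable_sum _ fun i _ => measurable_pi_apply i
  convert (h.indepFun_finset₀ s t hst hW).comp (hsum s) (hsum t) using 1 <;>
  · ext ω
    simp only [Function.comp_apply, Finset.sum_apply, Finset.univ_eq_attach]
    exact (Finset.sum_attach _ fun i => W i ω).symm

lemma integral_abs_sum_rpow_le_of_subset [IsProbabilityMeasure μ] {ι : Type*} {W : ι → Ω → ℝ}
    (hind : iIndepFun W μ) (hmean : ∀ i, ∫ ω, W i ω ∂μ = 0) {p : ℝ} (hp : 1 ≤ p)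
    (hmom : ∀ i, MemLp (W i) (ENNReal.ofReal p) μ) {s t : Finset ι} (hst : s ⊆ t) :
    ∫ ω, |∑ i ∈ s, W i ω| ^ p ∂μ ≤ ∫ ω, |∑ i ∈ t, W i ω| ^ p ∂μ := by
  classical
  have hint : ∀ i, Integrable (W i) μ := fun i =>
    (hmom i).integrable (by simpa using ENNReal.ofReal_le_ofReal hp)
  have hp0 : ENNReal.ofReal p ≠ 0 := (ENNReal.ofReal_pos.2 (by linarith)).ne'
  have hpowSum : ∀ u : Finset ι, Integrable (fun ω => |∑ i ∈ u, W i ω| ^ p) μ := fun u => by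
    simpa [ENNReal.toReal_ofReal (by linarith : 0 ≤ p)] using
      (memLp_finsetSum' u fun i _ => hmom i).integrable_norm_rpow hp0 (by simp)
  have hsplit : ∀ ω, ∑ i ∈ s, W i ω + ∑ i ∈ t \ s, W i ω = ∑ i ∈ t, W i ω := fun ω => by
    rw [add_comm, sum_sdiff hst]
  have h := integral_comp_le_integral_comp_add_of_indepFun (convexOn_abs_rpow hp)
    ((Real.continuous_rpow_const (by linarith)).comp continuous_abs)
    (X := ∑ i ∈ s, W i) (Y := ∑ i ∈ t \ s, W i)
    (s.aemeasurable_sum fun i _ => (hint i).aemeasurable)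
    ((t \ s).aemeasurable_sum fun i _ => (hint i).aemeasurable)
    (hind.indepFun_sum_sum_of_disjoint (fun i => (hint i).aemeasurable) disjoint_sdiff)
    (integrable_finsetSum' _ fun i _ => hint i)
    (by simp only [Finset.sum_apply, integral_finsetSum _ fun i _ => hint i, hmean, sum_const_zero])
    (by simpa only [Finset.sum_apply] using hpowSum s)
    (by simpa only [Finset.sum_apply, hsplit] using hpowSum t)
  simpa only [Finset.sum_apply, hsplit] using h

end

section DoubleSequence

variable {a : ℕ → ℕ → ℝ} {p : ℝ}

lemma div_mul_rpow_le_sum_block (hp : -1 ≤ p) (ha : ∀ m n, 0 ≤ a m n)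
    (hmono : ∀ ⦃m n k l⦄, m ≤ k → n ≤ l → a m n ≤ a k l) {m n : ℕ} (hm : 1 ≤ m) (hn : 1 ≤ n) :
    a m n / ((m : ℝ) * n) ^ p ≤ 4 ^ (p + 1) *
      ∑ q ∈ Ico (m - 1) (2 * m - 1) ×ˢ Ico (n - 1) (2 * n - 1),
        a (q.1 + 1) (q.2 + 1) / (((q.1 + 1 : ℕ) : ℝ) * ((q.2 + 1 : ℕ) : ℝ)) ^ (p + 1) := by
  set G := Ico (m - 1) (2 * m - 1) ×ˢ Ico (n - 1) (2 * n - 1)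
  have hm' : (1 : ℝ) ≤ m := by exact_mod_cast hm
  have hn' : (1 : ℝ) ≤ n := by exact_mod_cast hn
  have hmn : (0 : ℝ) < m * n := by positivity
  have hterm : ∀ q ∈ G, a m n / (4 * (m * n)) ^ (p + 1) ≤
      a (q.1 + 1) (q.2 + 1) / (((q.1 + 1 : ℕ) : ℝ) * ((q.2 + 1 : ℕ) : ℝ)) ^ (p + 1) := by
    intro q hq
    simp only [G, mem_product, mem_Ico] at hq
    have hk : ((q.1 + 1 : ℕ) : ℝ) ≤ 2 * m := by exact_mod_cast (by omega : q.1 + 1 ≤ 2 * m)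
    have hl : ((q.2 + 1 : ℕ) : ℝ) ≤ 2 * n := by exact_mod_cast (by omega : q.2 + 1 ≤ 2 * n)
    refine div_le_div₀ (ha _ _) (hmono (by omega) (by omega)) (by positivity)
      (Real.rpow_le_rpow (by positivity) ?_ (by linarith))
    calc ((q.1 + 1 : ℕ) : ℝ) * ((q.2 + 1 : ℕ) : ℝ) ≤ (2 * m) * (2 * n) := by gcongr
      _ = 4 * (m * n) := by ring
  have hcard : (#G : ℝ) = m * n := by
    simp only [G, card_product, Nat.card_Ico]
    push_cast [(by omega : 2 * m - 1 - (m - 1) = m), (by omega : 2 * n - 1 - (n - 1) = n)]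
    rfl
  calc a m n / ((m : ℝ) * n) ^ p = 4 ^ (p + 1) * (#G * (a m n / (4 * (m * n)) ^ (p + 1))) := by
        rw [hcard, Real.mul_rpow (by norm_num) hmn.le, Real.rpow_add_one hmn.ne']
        field_simp
    _ ≤ _ := by
        gcongr
        simpa only [nsmul_eq_mul] using card_nsmul_le_sum G _ _ hterm

lemma exists_forall_div_mul_rpow_lt_of_summable (hp : -1 ≤ p) (ha : ∀ m n, 0 ≤ a m n)
    (hmono : ∀ ⦃m n k l⦄, m ≤ k → n ≤ l → a m n ≤ a k l)
    (hsum : Summable fun q : ℕ × ℕ =>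
      a (q.1 + 1) (q.2 + 1) / (((q.1 + 1 : ℕ) : ℝ) * ((q.2 + 1 : ℕ) : ℝ)) ^ (p + 1))
    {ε : ℝ} (hε : 0 < ε) :
    ∃ N : ℕ, ∀ m n : ℕ, 1 ≤ m → 1 ≤ n → N ≤ max m n → a m n / ((m : ℝ) * n) ^ p < ε := by
  have hC : (0 : ℝ) < 4 ^ (p + 1) := by positivity
  obtain ⟨F, hF⟩ := hsum.vanishing (Iio_mem_nhds (div_pos hε hC))
  refine ⟨F.sup (fun q => max q.1 q.2) + 2, fun m n hm hn hN => ?_⟩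
  have hdisj : Disjoint (Ico (m - 1) (2 * m - 1) ×ˢ Ico (n - 1) (2 * n - 1)) F := by
    refine disjoint_left.2 fun q hq hqF => ?_
    have := le_sup (f := fun q : ℕ × ℕ => max q.1 q.2) hqF
    simp only [mem_product, mem_Ico] at hq
    omega
  calc a m n / ((m : ℝ) * n) ^ p ≤ 4 ^ (p + 1) * _ := div_mul_rpow_le_sum_block hp ha hmono hm hn
    _ < 4 ^ (p + 1) * (ε / 4 ^ (p + 1)) := by gcongr; exact hF _ hdisj
    _ = ε := by field_simp

end DoubleSequence

theorem stmt4
    {Ω : Type*} [MeasurableSpace Ω] (μ : Measure Ω) [IsProbabilityMeasure μ]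
    (V : ℕ → ℕ → Ω → ℝ) (p : ℝ) (hp : 1 ≤ p)
    (hindep : iIndepFun (fun q : ℕ × ℕ => V q.1 q.2) μ)
    (hint : ∀ m n, Integrable (V m n) μ)
    (hmean : ∀ m n, ∫ ω, V m n ω ∂μ = 0)
    (hmom : ∀ m n : ℕ, Integrable (fun ω => |V m n ω| ^ p) μ)
    (hsum : Summable (fun q : ℕ × ℕ =>
      (∫ ω, |∑ i ∈ Finset.Icc 1 (q.1 + 1), ∑ j ∈ Finset.Icc 1 (q.2 + 1), V i j ω| ^ p ∂μ) /
        (((q.1 + 1 : ℕ) : ℝ) * ((q.2 + 1 : ℕ) : ℝ)) ^ (p + 1))) :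
    ∀ ε > (0 : ℝ), ∃ N : ℕ, ∀ m n : ℕ, 1 ≤ m → 1 ≤ n → N ≤ max m n →
      (∫ ω, |∑ i ∈ Finset.Icc 1 m, ∑ j ∈ Finset.Icc 1 n, V i j ω| ^ p ∂μ) /
        ((m : ℝ) * (n : ℝ)) ^ p < ε := by
  have hp0 : ENNReal.ofReal p ≠ 0 := (ENNReal.ofReal_pos.2 (by linarith)).ne'
  have hLp : ∀ q : ℕ × ℕ, MemLp (V q.1 q.2) (ENNReal.ofReal p) μ := fun q => by
    rw [← integrable_norm_rpow_iff (hint q.1 q.2).1 hp0 (by simp)]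
    simpa [ENNReal.toReal_ofReal (by linarith : 0 ≤ p)] using hmom q.1 q.2
  have hmono : ∀ ⦃m n k l : ℕ⦄, m ≤ k → n ≤ l →
      ∫ ω, |∑ i ∈ Icc 1 m, ∑ j ∈ Icc 1 n, V i j ω| ^ p ∂μ ≤
        ∫ ω, |∑ i ∈ Icc 1 k, ∑ j ∈ Icc 1 l, V i j ω| ^ p ∂μ := fun m n k l hmk hnl => by
    simpa only [sum_product] using integral_abs_sum_rpow_le_of_subset hindep
      (fun q => hmean q.1 q.2) hp hLp (product_subset_product (Icc_subset_Icc le_rfl hmk)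
        (Icc_subset_Icc le_rfl hnl))
  exact fun ε hε => exists_forall_div_mul_rpow_lt_of_summable (by linarith)
    (fun m n => integral_nonneg fun ω => by positivity) hmono hsum hε
end

section
/- Let {V_{mn}} be a double array of independent symmetric random variables in a real separable Banach space (or in ℝ) and suppose S_{mn}/(mn) → 0 almost surely as m ∨ n → ∞, where S_{mn} = ∑_{i=1}^m ∑_{j=1}^n V_{ij}. Then for every ε > 0, ∑_{m=1}^∞ ∑_{n=1}^∞ (1/(mn)) P(‖∑_{i=m+1}^{2m} ∑_{j=n+1}^{2n} V_{ij}‖ > ε m n) < ∞. -/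
/-!
Write `S(a,b;c,d)` for the sum of `V i j` over `a < i ≤ b`, `c < j ≤ d`. By inclusion–exclusion such
a block is a signed sum of four partial sums `S_{xy}`, so the strong law makes it `o(bd)` once
`max(a,c)` is large. Applied to the dyadic blocks `D_{kl} = (2^k, 2^{k+2}] × (2^l, 2^{l+2}]`, this
says that almost surely only finitely many of the events `‖S(D_{kl})‖ > ε 2^k 2^l` occur. Within a
fixed parity class of `(k, l)` the blocks are disjoint, so these events are independent, and the
second Borel–Cantelli lemma makes their probabilities summable.

The block `(m, 2m] × (n, 2n]` lies in `D_{kl}` for `k = ⌊log₂ m⌋`, `l = ⌊log₂ n⌋`. The rest of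
`D_{kl}` is independent of it and, by the strong law again, small with probability at least `1/2`
once `max(m, n)` is large, whence `P(block large) ≤ 2 P(D_{kl} large)`. At most `2^k · 2^l` pairs
`(m, n)` share `(k, l)`, each of weight `1/(mn) ≤ 2^{-k-l}`, so the weighted series is dominated
by `2 ∑ P(D_{kl} large)`.
-/

open MeasureTheory ProbabilityTheory Finset Filter
open scoped ENNReal Topology

section RectSum

def rectSum {M : Type*} [AddCommMonoid M] (v : ℕ → ℕ → M) (a b c d : ℕ) : M :=
  ∑ i ∈ Ioc a b, ∑ j ∈ Ioc c d, v i j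

theorem rectSum_eq_sum_product {M : Type*} [AddCommMonoid M] (v : ℕ → ℕ → M) (a b c d : ℕ) :
    rectSum v a b c d = ∑ p ∈ Ioc a b ×ˢ Ioc c d, v p.1 p.2 := by
  rw [rectSum, sum_product]

theorem rectSum_eq_sub {G : Type*} [AddCommGroup G] (v : ℕ → ℕ → G) {a b c d : ℕ}
    (hab : a ≤ b) (hcd : c ≤ d) :
    rectSum v a b c d =
      rectSum v 0 b 0 d - rectSum v 0 a 0 d - (rectSum v 0 b 0 c - rectSum v 0 a 0 c) := by
  have interval {x y : ℕ} (f : ℕ → G) (hxy : x ≤ y) :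
      ∑ i ∈ Ioc x y, f i = ∑ i ∈ Ioc 0 y, f i - ∑ i ∈ Ioc 0 x, f i :=
    eq_sub_of_add_eq' (sum_Ioc_consecutive f (Nat.zero_le x) hxy)
  simp only [rectSum, interval _ hcd, sum_sub_distrib, interval _ hab]
  abel

variable {E : Type*} [SeminormedAddCommGroup E]

def PartialSumsLE (v : ℕ → ℕ → E) (δ : ℝ) (N : ℕ) : Prop :=
  ∀ x y : ℕ, N ≤ max x y → ‖rectSum v 0 x 0 y‖ ≤ δ * (x * y)

variable {v : ℕ → ℕ → E} {δ : ℝ} {N : ℕ}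

theorem partialSumsLE_of_forall_lt
    (h : ∀ m n : ℕ, 1 ≤ m → 1 ≤ n → N ≤ max m n →
      ‖∑ i ∈ Icc 1 m, ∑ j ∈ Icc 1 n, v i j‖ < δ * (m * n)) :
    PartialSumsLE v δ N := by
  intro x y hxy
  rcases Nat.eq_zero_or_pos x with rfl | hx
  · simp [rectSum]
  rcases Nat.eq_zero_or_pos y with rfl | hy
  · simp [rectSum]
  have hIcc (z : ℕ) : Icc 1 z = Ioc 0 z := Icc_add_one_left_eq_Ioc 0 z
  simpa only [rectSum, hIcc] using (h x y hx hy hxy).le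

theorem PartialSumsLE.mono (h : PartialSumsLE v δ N) {N' : ℕ} (hN : N ≤ N') :
    PartialSumsLE v δ N' :=
  fun x y hxy => h x y (hN.trans hxy)

theorem PartialSumsLE.norm_rectSum_le (h : PartialSumsLE v δ N) (hδ : 0 ≤ δ) {a b c d : ℕ}
    (hab : a ≤ b) (hcd : c ≤ d) (hN : N ≤ max a c) :
    ‖rectSum v a b c d‖ ≤ 4 * δ * (b * d) := by
  have corner {x y : ℕ} (hax : a ≤ x) (hxb : x ≤ b) (hcy : c ≤ y) (hyd : y ≤ d) :
      ‖rectSum v 0 x 0 y‖ ≤ δ * (b * d) :=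
    (h x y (hN.trans (max_le_max hax hcy))).trans (by gcongr)
  rw [rectSum_eq_sub v hab hcd]
  refine (norm_sub_le _ _).trans ((add_le_add (norm_sub_le _ _) (norm_sub_le _ _)).trans ?_)
  linarith [corner hab le_rfl hcd le_rfl, corner le_rfl hab hcd le_rfl,
    corner hab le_rfl le_rfl hcd, corner le_rfl hab le_rfl hcd]

def dyadicRect (k l : ℕ) : Finset (ℕ × ℕ) := Ioc (2 ^ k) (2 ^ (k + 2)) ×ˢ Ioc (2 ^ l) (2 ^ (l + 2))

theorem PartialSumsLE.norm_sum_dyadicRect_le (h : PartialSumsLE v δ N) (hδ : 0 ≤ δ) {k l : ℕ}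
    (hN : N ≤ max (2 ^ k) (2 ^ l)) :
    ‖∑ p ∈ dyadicRect k l, v p.1 p.2‖ ≤ 64 * δ * (2 ^ k * 2 ^ l) := by
  have hle : ∀ k, 2 ^ k ≤ 2 ^ (k + 2) := fun k => Nat.pow_le_pow_right two_pos (by omega)
  have := h.norm_rectSum_le hδ (hle k) (hle l) hN
  rw [rectSum_eq_sum_product] at this
  refine this.trans (le_of_eq ?_)
  push_cast
  ring

theorem disjoint_dyadicRect {k l k' l' : ℕ}
    (h : k + 2 ≤ k' ∨ k' + 2 ≤ k ∨ l + 2 ≤ l' ∨ l' + 2 ≤ l) :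
    Disjoint (dyadicRect k l) (dyadicRect k' l') := by
  refine disjoint_left.2 fun p hp hp' => ?_
  simp only [dyadicRect, mem_product, mem_Ioc] at hp hp'
  have hpow {u w : ℕ} (h : u + 2 ≤ w) : 2 ^ (u + 2) ≤ 2 ^ w := Nat.pow_le_pow_right two_pos h
  rcases h with h | h | h | h
  · exact (hp'.1.1.trans_le (hp.1.2.trans (hpow h))).false
  · exact (hp.1.1.trans_le (hp'.1.2.trans (hpow h))).false
  · exact (hp'.2.1.trans_le (hp.2.2.trans (hpow h))).false
  · exact (hp.2.1.trans_le (hp'.2.2.trans (hpow h))).false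

theorem Ioc_prod_Ioc_subset_dyadicRect {m n : ℕ} (hm : m ≠ 0) (hn : n ≠ 0) :
    Ioc m (2 * m) ×ˢ Ioc n (2 * n) ⊆ dyadicRect (Nat.log 2 m) (Nat.log 2 n) := by
  have hdouble {x : ℕ} (hx : x ≠ 0) : 2 * x ≤ 2 ^ (Nat.log 2 x + 2) := by
    have := Nat.lt_pow_succ_log_self Nat.one_lt_two x
    rw [pow_succ] at this ⊢
    omega
  exact product_subset_product (Ioc_subset_Ioc (Nat.pow_log_le_self 2 hm) (hdouble hm))
    (Ioc_subset_Ioc (Nat.pow_log_le_self 2 hn) (hdouble hn))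

theorem PartialSumsLE.norm_sum_dyadicRect_sdiff_le (h : PartialSumsLE v δ N) (hδ : 0 ≤ δ)
    {m n : ℕ} (hm : m ≠ 0) (hn : n ≠ 0) (hN : N ≤ max (2 ^ Nat.log 2 m) (2 ^ Nat.log 2 n)) :
    ‖∑ p ∈ dyadicRect (Nat.log 2 m) (Nat.log 2 n) \ Ioc m (2 * m) ×ˢ Ioc n (2 * n), v p.1 p.2‖ ≤
      128 * δ * (2 ^ Nat.log 2 m * 2 ^ Nat.log 2 n) := by
  have hlt (x : ℕ) : (x : ℝ) ≤ 2 * 2 ^ Nat.log 2 x := by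
    have := Nat.lt_pow_succ_log_self Nat.one_lt_two x
    rw [pow_succ'] at this
    exact_mod_cast this.le
  have hsmall := h.norm_rectSum_le hδ (Nat.le_mul_of_pos_left m two_pos)
    (Nat.le_mul_of_pos_left n two_pos)
    (hN.trans (max_le_max (Nat.pow_log_le_self 2 hm) (Nat.pow_log_le_self 2 hn)))
  rw [rectSum_eq_sum_product] at hsmall
  have hbig := h.norm_sum_dyadicRect_le hδ hN
  have hmn : 4 * δ * (((2 * m : ℕ) : ℝ) * ((2 * n : ℕ) : ℝ)) ≤
      64 * δ * (2 ^ Nat.log 2 m * 2 ^ Nat.log 2 n) := by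
    push_cast
    nlinarith [mul_le_mul (hlt m) (hlt n) (by positivity) (by positivity),
      mul_nonneg hδ (mul_nonneg (m.cast_nonneg (α := ℝ)) (n.cast_nonneg (α := ℝ)))]
  rw [sum_sdiff_eq_sub (Ioc_prod_Ioc_subset_dyadicRect hm hn)]
  linarith [norm_sub_le (∑ p ∈ dyadicRect (Nat.log 2 m) (Nat.log 2 n), v p.1 p.2)
    (∑ p ∈ Ioc m (2 * m) ×ˢ Ioc n (2 * n), v p.1 p.2)]

end RectSum

namespace ProbabilityTheory

variable {Ω : Type*} {mΩ : MeasurableSpace Ω} {μ : Measure Ω}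

section FinsetSum

variable {ι κ β : Type*} [AddCommMonoid β] [MeasurableSpace β] [MeasurableAdd₂ β]
  {f : ι → Ω → β}

theorem iIndepFun.iIndepFun_finsetSum (hf : iIndepFun f μ) (hmeas : ∀ i, Measurable (f i))
    {B : κ → Finset ι} (hB : Pairwise fun r r' => Disjoint (B r) (B r')) :
    iIndepFun (fun r ω => ∑ i ∈ B r, f i ω) μ := by
  classical
  have := hf.isProbabilityMeasure
  refine iIndepFun_iff_measure_inter_preimage_eq_mul.2 fun S => ?_
  induction S using Finset.induction_on with
  | empty => simp
  | insert r S hr ih =>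
    intro sets hsets
    set T := S.biUnion B
    have hdisj : Disjoint (B r) T :=
      disjoint_biUnion_right _ _ _ |>.2 fun r' hr' => hB (ne_of_mem_of_not_mem hr' hr).symm
    have hind := (hf.indepFun_finset (B r) T hdisj hmeas).comp
      (φ := fun w => ∑ i, w i) (ψ := fun w r' => ∑ i ∈ (B r').subtype (· ∈ T), w i)
      (Finset.measurable_sum _ fun i _ => measurable_pi_apply i)
      (measurable_pi_lambda _ fun r' => Finset.measurable_sum _ fun i _ => measurable_pi_apply i)
    have hD : MeasurableSet {w : κ → β | ∀ r' ∈ S, w r' ∈ sets r'} := by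
      simp only [Set.ofPred_forall]
      exact Finset.measurableSet_biInter S fun r' hr' =>
        measurable_pi_apply r' (hsets r' (mem_insert_of_mem hr'))
    have key := hind.measure_inter_preimage_eq_mul _ _ (hsets r (mem_insert_self r S)) hD
    have hpre : (fun ω r' => ∑ i ∈ (B r').subtype (· ∈ T), f i ω) ⁻¹'
        {w | ∀ r' ∈ S, w r' ∈ sets r'} = ⋂ r' ∈ S, (fun ω => ∑ i ∈ B r', f i ω) ⁻¹' sets r' := by
      ext ω
      simp only [Set.mem_preimage, Set.mem_ofPred_eq, Set.mem_iInter]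
      refine forall₂_congr fun r' hr' => ?_
      exact Iff.of_eq (congrArg (· ∈ sets r')
        (sum_subtype_of_mem (f · ω) fun i hi => mem_biUnion.2 ⟨r', hr', hi⟩))
    have hX : (fun ω => ∑ i : B r, f i ω) = fun ω => ∑ i ∈ B r, f i ω :=
      funext fun ω => sum_coe_sort (B r) (f · ω)
    simp only [Function.comp_def, hpre, hX] at key
    rw [set_biInter_insert, prod_insert hr, key, ih fun i hi => hsets i (mem_insert_of_mem hi)]

theorem iIndepFun.indepFun_finsetSum_finsetSum (hf : iIndepFun f μ)
    (hmeas : ∀ i, Measurable (f i)) {S T : Finset ι} (hST : Disjoint S T) :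
    IndepFun (fun ω => ∑ i ∈ S, f i ω) (fun ω => ∑ i ∈ T, f i ω) μ := by
  have hB : Pairwise fun b b' : Bool => Disjoint (bif b then S else T) (bif b' then S else T) := by
    rintro (_ | _) (_ | _) h
    all_goals first | exact absurd rfl h | exact hST | exact hST.symm
  exact (hf.iIndepFun_finsetSum hmeas hB).indepFun (i := true) (j := false) (by decide)

end FinsetSum

theorem tsum_measure_ne_top_of_ae_finite {ι : Type*} [Countable ι] {s : ι → Set Ω}
    (hsm : ∀ i, MeasurableSet (s i)) (hs : iIndepSet s μ)
    (hfin : ∀ᵐ ω ∂μ, {i | ω ∈ s i}.Finite) :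
    ∑' i, μ (s i) ≠ ∞ := by
  have := hs.isProbabilityMeasure
  rcases finite_or_infinite ι with hι | hι
  · have := Fintype.ofFinite ι
    rw [tsum_fintype]
    exact ENNReal.sum_ne_top.2 fun i _ => measure_ne_top μ _
  obtain ⟨_⟩ := nonempty_denumerable ι
  let e : ℕ ≃ ι := (Denumerable.eqv ι).symm
  intro htop
  rw [← e.tsum_eq] at htop
  have hone := measure_limsup_eq_one (fun n => hsm (e n)) (hs.precomp e.injective) htop
  have hzero : μ (limsup (s ∘ e) atTop) = 0 := by
    refine measure_mono_null (fun ω hω => ?_) (ae_iff.1 hfin)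
    rw [mem_limsup_iff_frequently_mem, Nat.frequently_atTop_iff_infinite] at hω
    exact fun hω_fin => hω (hω_fin.preimage e.injective.injOn)
  exact zero_ne_one (hzero.symm.trans hone)

theorem tendsto_measure_setOf_of_ae_exists [IsProbabilityMeasure μ] {p : ℕ → Ω → Prop}
    (hp : ∀ ω, Monotone (p · ω)) (h : ∀ᵐ ω ∂μ, ∃ N, p N ω) :
    Tendsto (fun N => μ {ω | p N ω}) atTop (𝓝 1) := by
  have hunion : μ (⋃ N, {ω | p N ω}) = 1 := by
    rw [← measure_univ (μ := μ)]
    exact measure_congr (ae_eq_univ.2 (by simpa [Set.compl_def] using ae_iff.1 h))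
  have := tendsto_measure_iUnion_atTop (μ := μ) (s := fun N => {ω | p N ω})
    fun N N' hNN' ω hω => hp ω hNN' hω
  rwa [hunion] at this

theorem IndepFun.measure_lt_norm_mul_le {E : Type*} [SeminormedAddCommGroup E] [MeasurableSpace E]
    [OpensMeasurableSpace E] {X Y : Ω → E} (hXY : IndepFun X Y μ) (s t : ℝ) :
    μ {ω | s + t < ‖X ω‖} * μ {ω | ‖Y ω‖ ≤ t} ≤ μ {ω | s < ‖X ω + Y ω‖} := by
  refine (hXY.measure_inter_preimage_eq_mul _ _
    (measurableSet_lt measurable_const continuous_norm.measurable)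
    (measurableSet_le continuous_norm.measurable measurable_const)).symm.le.trans
      (measure_mono ?_)
  rintro ω ⟨hX, hY⟩
  have := norm_sub_le (X ω + Y ω) (Y ω)
  simp only [add_sub_cancel_right] at this
  simp only [Set.mem_preimage, Set.mem_ofPred_eq] at hX hY ⊢
  linarith

theorem IndepFun.measure_lt_norm_le_two_mul {E : Type*} [SeminormedAddCommGroup E]
    [MeasurableSpace E] [OpensMeasurableSpace E] {X Y : Ω → E} (hXY : IndepFun X Y μ) {s t : ℝ}
    (hY : 2⁻¹ ≤ μ {ω | ‖Y ω‖ ≤ t}) :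
    μ {ω | s + t < ‖X ω‖} ≤ 2 * μ {ω | s < ‖X ω + Y ω‖} := by
  have hY' : 1 ≤ 2 * μ {ω | ‖Y ω‖ ≤ t} :=
    (ENNReal.mul_inv_cancel two_ne_zero ENNReal.ofNat_ne_top).symm.le.trans
      (mul_le_mul_right hY 2)
  calc _ ≤ μ {ω | s + t < ‖X ω‖} * (2 * μ {ω | ‖Y ω‖ ≤ t}) := le_mul_of_one_le_right' hY'
    _ = 2 * (μ {ω | s + t < ‖X ω‖} * μ {ω | ‖Y ω‖ ≤ t}) := mul_left_comm _ _ _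
    _ ≤ _ := by gcongr; exact hXY.measure_lt_norm_mul_le s t

end ProbabilityTheory

theorem ENNReal.tsum_prod_ne_top_of_parity {f : ℕ → ℕ → ℝ≥0∞}
    (h : ∀ a < 2, ∀ b < 2, ∑' p : ℕ × ℕ, f (2 * p.1 + a) (2 * p.2 + b) ≠ ∞) :
    ∑' p : ℕ × ℕ, f p.1 p.2 ≠ ∞ := by
  have split (g : ℕ → ℝ≥0∞) : ∑' k, g k = ∑' i, g (2 * i) + ∑' i, g (2 * i + 1) :=
    (tsum_even_add_odd ENNReal.summable ENNReal.summable).symm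
  have h' : ∀ a < 2, ∀ b < 2, ∑' i, ∑' j, f (2 * i + a) (2 * j + b) ≠ ∞ := fun a ha b hb => by
    rw [← ENNReal.tsum_prod (f := fun i j => f (2 * i + a) (2 * j + b))]
    exact h a ha b hb
  have h00 := h' 0 two_pos 0 two_pos
  have h01 := h' 0 two_pos 1 Nat.one_lt_two
  have h10 := h' 1 Nat.one_lt_two 0 two_pos
  have h11 := h' 1 Nat.one_lt_two 1 Nat.one_lt_two
  simp only [add_zero] at h00 h01 h10
  rw [ENNReal.tsum_prod, split, tsum_congr fun i => split _,
    tsum_congr fun i => split (f (2 * i + 1)), ENNReal.tsum_add, ENNReal.tsum_add]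
  simp only [ne_eq, ENNReal.add_eq_top, not_or]
  exact ⟨⟨h00, h01⟩, h10, h11⟩

theorem ENNReal.tsum_inv_mul_log_le (c : ℕ → ℝ≥0∞) :
    ∑' i : ℕ, ((i + 1 : ℕ) : ℝ≥0∞)⁻¹ * c (Nat.log 2 (i + 1)) ≤ ∑' k, c k := by
  let g : ℕ × ℕ → ℝ≥0∞ := fun p => if p.2 < 2 ^ p.1 then (2 ^ p.1 : ℝ≥0∞)⁻¹ * c p.1 else 0
  -- `i + 1 = 2 ^ k + r` with `k = log₂ (i + 1)` and `r < 2 ^ k`: the `2 ^ k` indices sharing `k`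
  -- each carry weight at most `2⁻ᵏ`.
  let φ : ℕ → ℕ × ℕ := fun i => (Nat.log 2 (i + 1), i + 1 - 2 ^ Nat.log 2 (i + 1))
  have hlow (i : ℕ) : 2 ^ Nat.log 2 (i + 1) ≤ i + 1 := Nat.pow_log_le_self 2 i.succ_ne_zero
  have hup (i : ℕ) : i + 1 < 2 ^ Nat.log 2 (i + 1) * 2 :=
    pow_succ 2 _ ▸ Nat.lt_pow_succ_log_self Nat.one_lt_two _
  have hφ : φ.Injective := fun i j hij => by
    obtain ⟨hlog, hrem⟩ := Prod.mk.inj hij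
    have hi := hlow i
    have hj := hlow j
    rw [hlog] at hrem hi
    omega
  have hterm (i : ℕ) : ((i + 1 : ℕ) : ℝ≥0∞)⁻¹ * c (Nat.log 2 (i + 1)) ≤ g (φ i) := by
    have hr : i + 1 - 2 ^ Nat.log 2 (i + 1) < 2 ^ Nat.log 2 (i + 1) := by
      have := hlow i
      have := hup i
      omega
    simp only [g, φ, hr, if_true]
    gcongr
    exact_mod_cast hlow i
  have hrow (k : ℕ) : ∑' r, g (k, r) = c k := by
    rw [tsum_eq_sum (s := range (2 ^ k)) fun r hr => if_neg (by simpa using hr),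
      sum_congr rfl fun r hr => if_pos (mem_range.1 hr)]
    simp only [sum_const, card_range, nsmul_eq_mul, ← mul_assoc, Nat.cast_pow, Nat.cast_ofNat]
    rw [ENNReal.mul_inv_cancel (by simp) (by simp), one_mul]
  calc _ ≤ ∑' i, g (φ i) := ENNReal.tsum_le_tsum hterm
    _ ≤ ∑' p, g p := ENNReal.tsum_comp_le_tsum_of_injective hφ g
    _ = ∑' k, c k := by rw [ENNReal.tsum_prod']; exact tsum_congr hrow

theorem ENNReal.tsum_prod_inv_mul_log_le (c : ℕ → ℕ → ℝ≥0∞) :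
    ∑' q : ℕ × ℕ, ((q.1 + 1 : ℕ) : ℝ≥0∞)⁻¹ * ((q.2 + 1 : ℕ) : ℝ≥0∞)⁻¹ *
      c (Nat.log 2 (q.1 + 1)) (Nat.log 2 (q.2 + 1)) ≤ ∑' p : ℕ × ℕ, c p.1 p.2 := by
  rw [ENNReal.tsum_prod (f := fun i j => ((i + 1 : ℕ) : ℝ≥0∞)⁻¹ * ((j + 1 : ℕ) : ℝ≥0∞)⁻¹ *
    c (Nat.log 2 (i + 1)) (Nat.log 2 (j + 1))), ENNReal.tsum_prod]
  calc _ = ∑' i : ℕ, ((i + 1 : ℕ) : ℝ≥0∞)⁻¹ *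
        ∑' j : ℕ, ((j + 1 : ℕ) : ℝ≥0∞)⁻¹ * c (Nat.log 2 (i + 1)) (Nat.log 2 (j + 1)) := by
        simp only [mul_assoc, ENNReal.tsum_mul_left]
    _ ≤ ∑' i : ℕ, ((i + 1 : ℕ) : ℝ≥0∞)⁻¹ * ∑' l, c (Nat.log 2 (i + 1)) l :=
        ENNReal.tsum_le_tsum fun i => mul_le_mul_right (ENNReal.tsum_inv_mul_log_le _) _
    _ ≤ _ := ENNReal.tsum_inv_mul_log_le _

section DoubleArray

variable {Ω E : Type*} [MeasurableSpace Ω] {μ : Measure Ω} [SeminormedAddCommGroup E]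
  {V : ℕ → ℕ → Ω → E}

def dyadicEvent (V : ℕ → ℕ → Ω → E) (ε : ℝ) (k l : ℕ) : Set Ω :=
  {ω | ε * (2 ^ k * 2 ^ l) < ‖∑ p ∈ dyadicRect k l, V p.1 p.2 ω‖}

theorem ae_finite_setOf_mem_dyadicEvent
    (hP : ∀ δ > 0, ∀ᵐ ω ∂μ, ∃ N, PartialSumsLE (V · · ω) δ N) {ε : ℝ} (hε : 0 < ε) :
    ∀ᵐ ω ∂μ, {p : ℕ × ℕ | ω ∈ dyadicEvent V ε p.1 p.2}.Finite := by
  filter_upwards [hP (ε / 64) (by positivity)] with ω ⟨N, hN⟩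
  refine ((Set.finite_Iio N).prod (Set.finite_Iio N)).subset fun ⟨k, l⟩ hkl => ?_
  by_contra hsmall
  have hNkl : N ≤ max (2 ^ k) (2 ^ l) := by
    simp only [Set.mem_prod, Set.mem_Iio, not_and_or, not_lt] at hsmall
    rcases hsmall with h | h
    · exact le_max_of_le_left (h.trans Nat.lt_two_pow_self.le)
    · exact le_max_of_le_right (h.trans Nat.lt_two_pow_self.le)
  have := hN.norm_sum_dyadicRect_le (by positivity) hNkl
  have hkl' : ε * (2 ^ k * 2 ^ l) < _ := hkl
  linarith

variable [MeasurableSpace E] [BorelSpace E] [SecondCountableTopology E]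

theorem measurableSet_dyadicEvent (hmeas : ∀ m n, Measurable (V m n)) (ε : ℝ) (k l : ℕ) :
    MeasurableSet (dyadicEvent V ε k l) :=
  measurableSet_lt measurable_const
    (continuous_norm.measurable.comp (Finset.measurable_sum _ fun p _ => hmeas p.1 p.2))

theorem iIndepSet_dyadicEvent (hindep : iIndepFun (fun q : ℕ × ℕ => V q.1 q.2) μ)
    (hmeas : ∀ m n, Measurable (V m n)) (ε : ℝ) (a b : ℕ) :
    iIndepSet (fun p : ℕ × ℕ => dyadicEvent V ε (2 * p.1 + a) (2 * p.2 + b)) μ := by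
  have hB : Pairwise fun p p' : ℕ × ℕ => Disjoint (dyadicRect (2 * p.1 + a) (2 * p.2 + b))
      (dyadicRect (2 * p'.1 + a) (2 * p'.2 + b)) := by
    rintro ⟨i, j⟩ ⟨i', j'⟩ hne
    rw [Ne, Prod.mk.injEq] at hne
    exact disjoint_dyadicRect (by omega)
  have hsums := hindep.iIndepFun_finsetSum (fun q => hmeas q.1 q.2) hB
  refine (iIndepSet_iff_meas_biInter fun p => measurableSet_dyadicEvent hmeas ε _ _).2 fun J => ?_
  exact hsums.measure_inter_preimage_eq_mul J
    (sets := fun p => {x : E | ε * (2 ^ (2 * p.1 + a) * 2 ^ (2 * p.2 + b)) < ‖x‖}) fun p _ =>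
    measurableSet_lt measurable_const continuous_norm.measurable

theorem tsum_measure_dyadicEvent_ne_top (hindep : iIndepFun (fun q : ℕ × ℕ => V q.1 q.2) μ)
    (hmeas : ∀ m n, Measurable (V m n))
    (hP : ∀ δ > 0, ∀ᵐ ω ∂μ, ∃ N, PartialSumsLE (V · · ω) δ N) {ε : ℝ} (hε : 0 < ε) :
    ∑' p : ℕ × ℕ, μ (dyadicEvent V ε p.1 p.2) ≠ ∞ := by
  refine ENNReal.tsum_prod_ne_top_of_parity (f := fun k l => μ (dyadicEvent V ε k l))
    fun a _ b _ => ?_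
  refine tsum_measure_ne_top_of_ae_finite (fun p => measurableSet_dyadicEvent hmeas ε _ _)
    (iIndepSet_dyadicEvent hindep hmeas ε a b) ?_
  filter_upwards [ae_finite_setOf_mem_dyadicEvent hP hε] with ω hω
  refine hω.preimage (f := fun p : ℕ × ℕ => (2 * p.1 + a, 2 * p.2 + b)) fun p _ p' _ h => ?_
  simp only [Prod.mk.injEq] at h
  ext <;> omega

-- `ε / 256` makes the rest `128 (ε / 256) 2^k 2^l` of the dyadic block at most `ε / 2 · 2^k 2^l`.
theorem measure_lt_norm_rectSum_le_two_mul_dyadicEvent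
    (hindep : iIndepFun (fun q : ℕ × ℕ => V q.1 q.2) μ) (hmeas : ∀ m n, Measurable (V m n))
    {ε : ℝ} (hε : 0 < ε) {M m n : ℕ} (hM : 2⁻¹ ≤ μ {ω | PartialSumsLE (V · · ω) (ε / 256) M})
    (hm : m ≠ 0) (hn : n ≠ 0) (hmn : 2 * M ≤ max m n) :
    μ {ω | ε * (m * n) < ‖rectSum (V · · ω) m (2 * m) n (2 * n)‖} ≤
      2 * μ (dyadicEvent V (ε / 2) (Nat.log 2 m) (Nat.log 2 n)) := by
  set k := Nat.log 2 m
  set l := Nat.log 2 n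
  set R := Ioc m (2 * m) ×ˢ Ioc n (2 * n)
  have hkm : 2 ^ k ≤ m := Nat.pow_log_le_self 2 hm
  have hln : 2 ^ l ≤ n := Nat.pow_log_le_self 2 hn
  have hsub : R ⊆ dyadicRect k l := Ioc_prod_Ioc_subset_dyadicRect hm hn
  have hMkl : M ≤ max (2 ^ k) (2 ^ l) := by
    have hm2 : m < 2 ^ k * 2 := pow_succ 2 k ▸ Nat.lt_pow_succ_log_self Nat.one_lt_two m
    have hn2 : n < 2 ^ l * 2 := pow_succ 2 l ▸ Nat.lt_pow_succ_log_self Nat.one_lt_two n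
    omega
  have hY : 2⁻¹ ≤ μ {ω | ‖∑ p ∈ dyadicRect k l \ R, V p.1 p.2 ω‖ ≤ ε / 2 * (2 ^ k * 2 ^ l)} :=
    hM.trans <| measure_mono fun ω hω =>
      (hω.norm_sum_dyadicRect_sdiff_le (by positivity) hm hn hMkl).trans_eq (by ring)
  have hX : {ω | ε * (m * n) < ‖rectSum (V · · ω) m (2 * m) n (2 * n)‖} ⊆
      {ω | ε / 2 * (2 ^ k * 2 ^ l) + ε / 2 * (2 ^ k * 2 ^ l) < ‖∑ p ∈ R, V p.1 p.2 ω‖} := by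
    intro ω hω
    have : (2 : ℝ) ^ k * 2 ^ l ≤ m * n := by
      exact_mod_cast Nat.mul_le_mul hkm hln
    simp only [Set.mem_ofPred_eq, rectSum_eq_sum_product] at hω ⊢
    nlinarith
  have hind := hindep.indepFun_finsetSum_finsetSum (fun q => hmeas q.1 q.2)
    (disjoint_sdiff (s := R) (t := dyadicRect k l))
  calc _ ≤ _ := measure_mono hX
    _ ≤ 2 * μ {ω | ε / 2 * (2 ^ k * 2 ^ l) <
          ‖∑ p ∈ R, V p.1 p.2 ω + ∑ p ∈ dyadicRect k l \ R, V p.1 p.2 ω‖} :=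
        hind.measure_lt_norm_le_two_mul hY
    _ = 2 * μ (dyadicEvent V (ε / 2) k l) := by
        simp only [add_comm (∑ p ∈ R, _), sum_sdiff hsub]
        rfl

theorem eventually_measure_lt_norm_rectSum_le [IsProbabilityMeasure μ]
    (hindep : iIndepFun (fun q : ℕ × ℕ => V q.1 q.2) μ) (hmeas : ∀ m n, Measurable (V m n))
    (hP : ∀ δ > 0, ∀ᵐ ω ∂μ, ∃ N, PartialSumsLE (V · · ω) δ N) {ε : ℝ} (hε : 0 < ε) :
    ∀ᶠ q : ℕ × ℕ in cofinite,
      μ {ω | ε * ((q.1 + 1 : ℕ) * (q.2 + 1 : ℕ)) <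
          ‖rectSum (V · · ω) (q.1 + 1) (2 * (q.1 + 1)) (q.2 + 1) (2 * (q.2 + 1))‖} ≤
        2 * μ (dyadicEvent V (ε / 2) (Nat.log 2 (q.1 + 1)) (Nat.log 2 (q.2 + 1))) := by
  obtain ⟨M, hM⟩ := ((tendsto_measure_setOf_of_ae_exists (fun ω _ _ hNN' h => h.mono hNN')
    (hP (ε / 256) (by positivity))).eventually_const_le (by norm_num : (2⁻¹ : ℝ≥0∞) < 1)).exists
  have hfar : ∀ᶠ q : ℕ × ℕ in cofinite, 2 * M ≤ max (q.1 + 1) (q.2 + 1) := by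
    refine eventually_cofinite.2
      (((Set.finite_Iio (2 * M)).prod (Set.finite_Iio (2 * M))).subset fun q hq => ?_)
    simp only [Set.mem_ofPred_eq, not_le, max_lt_iff] at hq
    exact ⟨Nat.lt_of_succ_lt hq.1, Nat.lt_of_succ_lt hq.2⟩
  filter_upwards [hfar] with q hq
  exact measure_lt_norm_rectSum_le_two_mul_dyadicEvent hindep hmeas hε hM (by omega) (by omega) hq

end DoubleArray

theorem stmt5_general
    {Ω : Type*} [MeasurableSpace Ω] (μ : Measure Ω) [IsProbabilityMeasure μ]
    {E : Type*} [NormedAddCommGroup E] [MeasurableSpace E] [BorelSpace E]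
    [SecondCountableTopology E]
    (V : ℕ → ℕ → Ω → E) (hmeas : ∀ m n, Measurable (V m n))
    (hindep : iIndepFun (fun q : ℕ × ℕ => V q.1 q.2) μ)
    (hslln : ∀ᵐ ω ∂μ, ∀ ε > (0 : ℝ), ∃ N : ℕ, ∀ m n : ℕ, 1 ≤ m → 1 ≤ n → N ≤ max m n →
      ‖∑ i ∈ Finset.Icc 1 m, ∑ j ∈ Finset.Icc 1 n, V i j ω‖ < ε * ((m : ℝ) * n)) :
    ∀ ε > (0 : ℝ), Summable (fun q : ℕ × ℕ =>
      (1 / (((q.1 + 1 : ℕ) : ℝ) * ((q.2 + 1 : ℕ) : ℝ))) *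
        (μ {ω | ε * (((q.1 + 1 : ℕ) : ℝ) * ((q.2 + 1 : ℕ) : ℝ)) <
          ‖∑ i ∈ Finset.Icc (q.1 + 2) (2 * (q.1 + 1)),
            ∑ j ∈ Finset.Icc (q.2 + 2) (2 * (q.2 + 1)), V i j ω‖}).toReal) := by
  intro ε hε
  have hP : ∀ δ > 0, ∀ᵐ ω ∂μ, ∃ N, PartialSumsLE (V · · ω) δ N := fun δ hδ => by
    filter_upwards [hslln] with ω hω
    exact (hω δ hδ).imp fun N => partialSumsLE_of_forall_lt
  have hdyadic : ∑' p : ℕ × ℕ, 2 * μ (dyadicEvent V (ε / 2) p.1 p.2) ≠ ∞ := by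
    rw [ENNReal.tsum_mul_left]
    exact ENNReal.mul_ne_top ENNReal.ofNat_ne_top
      (tsum_measure_dyadicEvent_ne_top hindep hmeas hP (by positivity))
  refine .of_norm_bounded_eventually (ENNReal.summable_toReal
    (ne_top_of_le_ne_top hdyadic (ENNReal.tsum_prod_inv_mul_log_le
      fun k l => 2 * μ (dyadicEvent V (ε / 2) k l)))) ?_
  filter_upwards [eventually_measure_lt_norm_rectSum_le hindep hmeas hP hε] with q hq
  simp only [rectSum, ← Icc_add_one_left_eq_Ioc, add_assoc, Nat.reduceAdd] at hq
  rw [Real.norm_of_nonneg (by positivity), ENNReal.toReal_mul, ENNReal.toReal_mul,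
    ENNReal.toReal_inv, ENNReal.toReal_inv, ENNReal.toReal_natCast, ENNReal.toReal_natCast,
    one_div, mul_inv]
  gcongr
  exact ENNReal.mul_ne_top ENNReal.ofNat_ne_top (measure_ne_top μ _)

theorem stmt5
    {Ω : Type*} [MeasurableSpace Ω] (μ : Measure Ω) [IsProbabilityMeasure μ]
    {E : Type*} [NormedAddCommGroup E] [MeasurableSpace E] [BorelSpace E]
    [SecondCountableTopology E]
    (V : ℕ → ℕ → Ω → E) (hmeas : ∀ m n, Measurable (V m n))
    (hindep : iIndepFun (fun q : ℕ × ℕ => V q.1 q.2) μ)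
    (hsym : ∀ m n, Measure.map (V m n) μ = Measure.map (fun ω => -V m n ω) μ)
    (hslln : ∀ᵐ ω ∂μ, ∀ ε > (0 : ℝ), ∃ N : ℕ, ∀ m n : ℕ, 1 ≤ m → 1 ≤ n → N ≤ max m n →
      ‖∑ i ∈ Finset.Icc 1 m, ∑ j ∈ Finset.Icc 1 n, V i j ω‖ < ε * ((m : ℝ) * n)) :
    ∀ ε > (0 : ℝ), Summable (fun q : ℕ × ℕ =>
      (1 / (((q.1 + 1 : ℕ) : ℝ) * ((q.2 + 1 : ℕ) : ℝ))) *
        (μ {ω | ε * (((q.1 + 1 : ℕ) : ℝ) * ((q.2 + 1 : ℕ) : ℝ)) <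
          ‖∑ i ∈ Finset.Icc (q.1 + 2) (2 * (q.1 + 1)),
            ∑ j ∈ Finset.Icc (q.2 + 2) (2 * (q.2 + 1)), V i j ω‖}).toReal) :=
  stmt5_general μ V hmeas hindep hslln
end

section
/- In the Banach space ℓ¹, let v^{(k)} be the k-th standard unit vector, let φ : ℕ×ℕ → ℕ be a bijection, and let {V_{mn}} be independent random elements with P(V_{mn} = v^{(φ(m,n))}) = P(V_{mn} = −v^{(φ(m,n))}) = 1/2. Then for 1 < p ≤ 2: (a) ∑_{m,n} E‖V_{mn}‖^p/(mn)^p < ∞; (b) ‖S_{mn}‖ = ∑_{i≤m,j≤n} ‖V_{ij}‖... in fact ‖S_{mn}‖_{ℓ¹} = mn almost surely; (c) E‖S_{mn}/(mn)^{(p+1)/p}‖^p = 1/(mn), so ∑_{m,n} E‖S_{mn}/(mn)^{(p+1)/p}‖^p = ∞, while E‖S_{mn}/(mn)^{(p+1)/p}‖^p → 0 as m ∨ n → ∞ and P(‖S_{mn}‖/(mn)^{(p+1)/p} > ε) = 0 for all large m ∨ n. -/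
/-!
Each `V m n` is almost surely `±e_{φ(m,n)}` with `φ` injective, so the summands of `S_{mn}` have
disjoint supports in `ℓ¹` and `‖S_{mn}‖ = mn` almost surely, whatever the signs. Thus
`‖S_{mn}‖ / (mn)^{(p+1)/p} = (mn)^{-1/p}` almost surely: it is small once `m ∨ n` is large, and its
`p`-th moment is `1/(mn)`, whose double series diverges. On the other hand `‖V_{mn}‖ = 1` gives
`∑ E‖V_{mn}‖^p / (mn)^p = (∑ 1/m^p)² < ∞`.
-/

open MeasureTheory ProbabilityTheory Finset

theorem ae_eq_or_eq_of_measure_eq_half {Ω β : Type*} [MeasurableSpace Ω] {μ : Measure Ω}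
    [IsProbabilityMeasure μ] [MeasurableSpace β] [MeasurableSingletonClass β]
    {X : Ω → β} (hX : Measurable X) {a b : β} (hab : a ≠ b)
    (ha : μ {ω | X ω = a} = 1 / 2) (hb : μ {ω | X ω = b} = 1 / 2) :
    ∀ᵐ ω ∂μ, X ω = a ∨ X ω = b := by
  have hdisj : Disjoint {ω | X ω = a} {ω | X ω = b} :=
    Set.disjoint_left.2 fun ω ha hb => hab (ha.symm.trans hb)
  have hmeas : MeasurableSet {ω | X ω = a ∨ X ω = b} :=
    (hX (measurableSet_singleton a)).union (hX (measurableSet_singleton b))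
  refine ae_iff.2 ((prob_compl_eq_zero_iff hmeas).2 ?_)
  rw [Set.ofPred_or, measure_union hdisj (hX (measurableSet_singleton b)), ha, hb,
    ENNReal.add_halves]

namespace lp

variable {ι : Type*} [DecidableEq ι] {p : ENNReal}

theorem single_one_ne_neg (k : ι) :
    (lp.single p k 1 : lp (fun _ : ι => ℝ) p) ≠ -lp.single p k 1 := by
  intro h
  have := congrArg (fun x : lp (fun _ : ι => ℝ) p => x k) h
  norm_num at this

theorem eq_single_apply_of_eq_single_or_neg {k : ι} {x : lp (fun _ : ι => ℝ) p}
    (hx : x = lp.single p k 1 ∨ x = -lp.single p k 1) : x = lp.single p k (x k) ∧ |x k| = 1 := by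
  rcases hx with rfl | rfl <;> simp

theorem norm_sum_single_one_of_injective {E κ : Type*} [NormedAddCommGroup E] {φ : κ → ι}
    (hφ : φ.Injective) (S : Finset κ) (f : κ → E) :
    ‖(∑ q ∈ S, lp.single 1 (φ q) (f q) : lp (fun _ : ι => E) 1)‖ = ∑ q ∈ S, ‖f q‖ := by
  have h := lp.norm_sum_single (E := fun _ : ι => E) (p := 1) (by norm_num)
    (Function.extend φ f 0) (S.image φ)
  simpa only [ENNReal.toReal_one, Real.rpow_one, sum_image hφ.injOn, hφ.extend_apply] using h

theorem norm_sum_eq_card_of_eq_single_or_neg {κ : Type*} {φ : κ → ι} {S : Finset κ}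
    (hφ : φ.Injective) {x : κ → lp (fun _ : ι => ℝ) 1}
    (hx : ∀ q ∈ S, x q = lp.single 1 (φ q) 1 ∨ x q = -lp.single 1 (φ q) 1) :
    ‖∑ q ∈ S, x q‖ = #S := by
  calc ‖∑ q ∈ S, x q‖
        = ‖(∑ q ∈ S, lp.single 1 (φ q) (x q (φ q)) : lp (fun _ : ι => ℝ) 1)‖ := by
        congr 1
        exact sum_congr rfl fun q hq => (eq_single_apply_of_eq_single_or_neg (hx q hq)).1
    _ = ∑ q ∈ S, |x q (φ q)| := norm_sum_single_one_of_injective hφ S _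
    _ = #S := by
        rw [sum_congr rfl fun q hq => (eq_single_apply_of_eq_single_or_neg (hx q hq)).2,
          sum_const, nsmul_one]

end lp

theorem ae_norm_sum_Icc_sum_Icc_eq_mul {Ω : Type*} [MeasurableSpace Ω] {μ : Measure Ω}
    {φ : ℕ × ℕ → ℕ} (hφ : Function.Injective φ) {V : ℕ → ℕ → Ω → lp (fun _ : ℕ => ℝ) 1}
    (hV : ∀ i j, 1 ≤ i → 1 ≤ j → ∀ᵐ ω ∂μ,
      V i j ω = lp.single 1 (φ (i, j)) 1 ∨ V i j ω = -lp.single 1 (φ (i, j)) 1) (m n : ℕ) :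
    ∀ᵐ ω ∂μ, ‖∑ i ∈ Icc 1 m, ∑ j ∈ Icc 1 n, V i j ω‖ = (m : ℝ) * n := by
  have hall : ∀ᵐ ω ∂μ, ∀ q ∈ Icc 1 m ×ˢ Icc 1 n,
      V q.1 q.2 ω = lp.single 1 (φ q) 1 ∨ V q.1 q.2 ω = -lp.single 1 (φ q) 1 :=
    (Filter.eventually_all_finset _).2 fun q hq =>
      hV q.1 q.2 (mem_Icc.1 (mem_product.1 hq).1).1 (mem_Icc.1 (mem_product.1 hq).2).1
  filter_upwards [hall] with ω hω
  rw [← sum_product', lp.norm_sum_eq_card_of_eq_single_or_neg hφ hω, card_product,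
    Nat.card_Icc, Nat.card_Icc]
  push_cast
  ring

theorem div_rpow_add_one_div_rpow {r p : ℝ} (hr : 0 < r) (hp : p ≠ 0) :
    (r / r ^ ((p + 1) / p)) ^ p = 1 / r := by
  rw [Real.div_rpow hr.le (Real.rpow_nonneg hr.le _), ← Real.rpow_mul hr.le,
    div_mul_cancel₀ _ hp, ← Real.rpow_sub hr, sub_add_cancel_left, Real.rpow_neg_one, one_div]

theorem le_mul_rpow_add_one_div {r p ε : ℝ} (hr : 0 < r) (hp : 0 < p) (hε : 0 < ε)
    (h : ε⁻¹ ^ p ≤ r) : r ≤ ε * r ^ ((p + 1) / p) := by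
  have hroot : ε⁻¹ ≤ r ^ p⁻¹ := by
    simpa [← Real.rpow_mul (inv_nonneg.2 hε.le), hp.ne'] using
      Real.rpow_le_rpow (by positivity) h (inv_nonneg.2 hp.le)
  have hexp : (p + 1) / p = 1 + p⁻¹ := by field_simp
  rw [hexp, Real.rpow_add hr, Real.rpow_one, mul_left_comm]
  exact le_mul_of_one_le_right hr.le ((inv_le_iff_one_le_mul₀' hε).1 hroot)

theorem exists_lt_mul_of_le_max (B : ℝ) :
    ∃ N : ℕ, ∀ m n : ℕ, 1 ≤ m → 1 ≤ n → N ≤ max m n → B < (m : ℝ) * n := by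
  obtain ⟨N, hN⟩ := exists_nat_gt B
  refine ⟨N, fun m n hm hn h => hN.trans_le ?_⟩
  exact_mod_cast h.trans (max_le (Nat.le_mul_of_pos_right m hn) (Nat.le_mul_of_pos_left n hm))

theorem summable_one_div_succ_rpow_mul_succ_rpow {p : ℝ} (hp : 1 < p) :
    Summable fun q : ℕ × ℕ => 1 / (((q.1 + 1 : ℕ) : ℝ) ^ p * ((q.2 + 1 : ℕ) : ℝ) ^ p) := by
  have h : Summable fun m : ℕ => 1 / ((m + 1 : ℕ) : ℝ) ^ p :=
    (summable_nat_add_iff 1).2 (Real.summable_one_div_nat_rpow.2 hp)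
  simpa only [one_div_mul_one_div] using
    h.mul_of_nonneg h (fun _ => by positivity) (fun _ => by positivity)

theorem not_summable_one_div_succ_mul_succ :
    ¬ Summable fun q : ℕ × ℕ => 1 / (((q.1 + 1 : ℕ) : ℝ) * ((q.2 + 1 : ℕ) : ℝ)) := by
  intro h
  have hrow := h.comp_injective (fun a b h => congrArg Prod.fst h : (fun m => (m, 0)).Injective)
  simp only [Function.comp_def, zero_add, Nat.cast_one, mul_one] at hrow
  exact Real.not_summable_one_div_natCast ((summable_nat_add_iff 1).1 hrow)

theorem stmt10_general
    {Ω : Type*} [MeasurableSpace Ω] (μ : Measure Ω) [IsProbabilityMeasure μ]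
    [MeasurableSpace (lp (fun _ : ℕ => ℝ) 1)] [BorelSpace (lp (fun _ : ℕ => ℝ) 1)]
    (φ : ℕ × ℕ → ℕ) (hφ : Function.Bijective φ)
    (V : ℕ → ℕ → Ω → lp (fun _ : ℕ => ℝ) 1) (hmeas : ∀ m n, Measurable (V m n))
    (hdist : ∀ m n : ℕ, 1 ≤ m → 1 ≤ n →
      μ {ω | V m n ω = lp.single 1 (φ (m, n)) (1 : ℝ)} = 1 / 2 ∧
      μ {ω | V m n ω = -lp.single 1 (φ (m, n)) (1 : ℝ)} = 1 / 2)
    (p : ℝ) (hp1 : 1 < p) :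
    (Summable (fun q : ℕ × ℕ =>
      (∫ ω, ‖V (q.1 + 1) (q.2 + 1) ω‖ ^ p ∂μ) /
        (((q.1 + 1 : ℕ) : ℝ) ^ p * ((q.2 + 1 : ℕ) : ℝ) ^ p))) ∧
    (∀ m n : ℕ, 1 ≤ m → 1 ≤ n → ∀ᵐ ω ∂μ,
      ‖∑ i ∈ Finset.Icc 1 m, ∑ j ∈ Finset.Icc 1 n, V i j ω‖ = (m : ℝ) * n) ∧
    (∀ m n : ℕ, 1 ≤ m → 1 ≤ n →
      (∫ ω, (‖∑ i ∈ Finset.Icc 1 m, ∑ j ∈ Finset.Icc 1 n, V i j ω‖ /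
        ((m : ℝ) * n) ^ ((p + 1) / p)) ^ p ∂μ) = 1 / ((m : ℝ) * n)) ∧
    (¬ Summable (fun q : ℕ × ℕ =>
      ∫ ω, (‖∑ i ∈ Finset.Icc 1 (q.1 + 1), ∑ j ∈ Finset.Icc 1 (q.2 + 1), V i j ω‖ /
        (((q.1 + 1 : ℕ) : ℝ) * ((q.2 + 1 : ℕ) : ℝ)) ^ ((p + 1) / p)) ^ p ∂μ)) ∧
    (∀ ε > (0 : ℝ), ∃ N : ℕ, ∀ m n : ℕ, 1 ≤ m → 1 ≤ n → N ≤ max m n →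
      (∫ ω, (‖∑ i ∈ Finset.Icc 1 m, ∑ j ∈ Finset.Icc 1 n, V i j ω‖ /
        ((m : ℝ) * n) ^ ((p + 1) / p)) ^ p ∂μ) < ε) ∧
    (∀ ε > (0 : ℝ), ∃ N : ℕ, ∀ m n : ℕ, 1 ≤ m → 1 ≤ n → N ≤ max m n →
      μ {ω | ε * ((m : ℝ) * n) ^ ((p + 1) / p) <
        ‖∑ i ∈ Finset.Icc 1 m, ∑ j ∈ Finset.Icc 1 n, V i j ω‖} = 0) := by
  have hp : 0 < p := by linarith
  have hsign : ∀ m n, 1 ≤ m → 1 ≤ n → ∀ᵐ ω ∂μ,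
      V m n ω = lp.single 1 (φ (m, n)) 1 ∨ V m n ω = -lp.single 1 (φ (m, n)) 1 :=
    fun m n hm hn => ae_eq_or_eq_of_measure_eq_half (hmeas m n) (lp.single_one_ne_neg _)
      (hdist m n hm hn).1 (hdist m n hm hn).2
  have hnorm := ae_norm_sum_Icc_sum_Icc_eq_mul hφ.1 hsign
  have hmean : ∀ m n : ℕ, 1 ≤ m → 1 ≤ n →
      (∫ ω, (‖∑ i ∈ Icc 1 m, ∑ j ∈ Icc 1 n, V i j ω‖ /
        ((m : ℝ) * n) ^ ((p + 1) / p)) ^ p ∂μ) = 1 / ((m : ℝ) * n) := fun m n hm hn =>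
    integral_eq_const <| (hnorm m n).mono fun ω h => by
      rw [h, div_rpow_add_one_div_rpow (by positivity) hp.ne']
  refine ⟨?_, fun m n _ _ => hnorm m n, hmean, ?_, fun ε hε => ?_, fun ε hε => ?_⟩
  · refine (summable_one_div_succ_rpow_mul_succ_rpow hp1).congr fun q => ?_
    rw [integral_eq_const ((hsign (q.1 + 1) (q.2 + 1) (by omega) (by omega)).mono fun ω h => ?_)]
    rcases h with h | h <;> simp [h]
  · exact fun h => not_summable_one_div_succ_mul_succ <|
      h.congr fun q => hmean _ _ (by omega) (by omega)
  · obtain ⟨N, hN⟩ := exists_lt_mul_of_le_max ε⁻¹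
    exact ⟨N, fun m n hm hn h => by
      rw [hmean m n hm hn, one_div]; exact inv_lt_of_inv_lt₀ hε (hN m n hm hn h)⟩
  · obtain ⟨N, hN⟩ := exists_lt_mul_of_le_max (ε⁻¹ ^ p)
    refine ⟨N, fun m n hm hn h => measure_mono_null ?_ (ae_iff.1 (hnorm m n))⟩
    intro ω hω heq
    have hpos : (0 : ℝ) < m * n := by positivity
    exact (le_mul_rpow_add_one_div hpos hp hε (hN m n hm hn h).le).not_gt (heq ▸ hω)

theorem stmt10
    {Ω : Type*} [MeasurableSpace Ω] (μ : Measure Ω) [IsProbabilityMeasure μ]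
    [MeasurableSpace (lp (fun _ : ℕ => ℝ) 1)] [BorelSpace (lp (fun _ : ℕ => ℝ) 1)]
    (φ : ℕ × ℕ → ℕ) (hφ : Function.Bijective φ)
    (V : ℕ → ℕ → Ω → lp (fun _ : ℕ => ℝ) 1) (hmeas : ∀ m n, Measurable (V m n))
    (hindep : iIndepFun (fun q : ℕ × ℕ => V q.1 q.2) μ)
    (hdist : ∀ m n : ℕ, 1 ≤ m → 1 ≤ n →
      μ {ω | V m n ω = lp.single 1 (φ (m, n)) (1 : ℝ)} = 1 / 2 ∧
      μ {ω | V m n ω = -lp.single 1 (φ (m, n)) (1 : ℝ)} = 1 / 2)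
    (p : ℝ) (hp1 : 1 < p) (hp2 : p ≤ 2) :
    (Summable (fun q : ℕ × ℕ =>
      (∫ ω, ‖V (q.1 + 1) (q.2 + 1) ω‖ ^ p ∂μ) /
        (((q.1 + 1 : ℕ) : ℝ) ^ p * ((q.2 + 1 : ℕ) : ℝ) ^ p))) ∧
    (∀ m n : ℕ, 1 ≤ m → 1 ≤ n → ∀ᵐ ω ∂μ,
      ‖∑ i ∈ Finset.Icc 1 m, ∑ j ∈ Finset.Icc 1 n, V i j ω‖ = (m : ℝ) * n) ∧
    (∀ m n : ℕ, 1 ≤ m → 1 ≤ n →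
      (∫ ω, (‖∑ i ∈ Finset.Icc 1 m, ∑ j ∈ Finset.Icc 1 n, V i j ω‖ /
        ((m : ℝ) * n) ^ ((p + 1) / p)) ^ p ∂μ) = 1 / ((m : ℝ) * n)) ∧
    (¬ Summable (fun q : ℕ × ℕ =>
      ∫ ω, (‖∑ i ∈ Finset.Icc 1 (q.1 + 1), ∑ j ∈ Finset.Icc 1 (q.2 + 1), V i j ω‖ /
        (((q.1 + 1 : ℕ) : ℝ) * ((q.2 + 1 : ℕ) : ℝ)) ^ ((p + 1) / p)) ^ p ∂μ)) ∧
    (∀ ε > (0 : ℝ), ∃ N : ℕ, ∀ m n : ℕ, 1 ≤ m → 1 ≤ n → N ≤ max m n →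
      (∫ ω, (‖∑ i ∈ Finset.Icc 1 m, ∑ j ∈ Finset.Icc 1 n, V i j ω‖ /
        ((m : ℝ) * n) ^ ((p + 1) / p)) ^ p ∂μ) < ε) ∧
    (∀ ε > (0 : ℝ), ∃ N : ℕ, ∀ m n : ℕ, 1 ≤ m → 1 ≤ n → N ≤ max m n →
      μ {ω | ε * ((m : ℝ) * n) ^ ((p + 1) / p) <
        ‖∑ i ∈ Finset.Icc 1 m, ∑ j ∈ Finset.Icc 1 n, V i j ω‖} = 0) :=
  stmt10_general μ φ hφ V hmeas hdist p hp1
end
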